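/- Suppose φ''_F > 0 > φ''_{2F} and φ''_F + 8φ''_{2F} > 0. Let u^a solve the linearized atomistic equations and u^{qcf} ∈ R^{2N+1} solve L^{qcf} u^{qcf} = f with boundary conditions u^{qcf}_{±N} = u^a_{±N}. Then ‖D(u^a − u^{qcf})‖_{ℓ^∞} ≤ 4 ε^2 |φ''_{2F}| ‖D^3 u^a‖_{ℓ^∞(C̃)} / (φ''_F + 8φ''_{2F}). -/

import Mathlib

noncomputable def eps (N : ℤ) : ℝ := 1 / (N : ℝ)

noncomputable def Dd (N : ℤ) (v : ℤ → ℝ) (j : ℤ) : ℝ := (v j - v (j-1)) / eps N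

noncomputable def D3 (N : ℤ) (v : ℤ → ℝ) (j : ℤ) : ℝ :=
  (Dd N v j - 2 * Dd N v (j-1) + Dd N v (j-2)) / (eps N)^2

noncomputable def Laop (N : ℤ) (φF φ2F : ℝ) (v : ℤ → ℝ) (j : ℤ) : ℝ :=
  φF * ((-v (j+1) + 2 * v j - v (j-1)) / (eps N)^2) +
  φ2F * ((-v (j+2) + 2 * v j - v (j-2)) / (eps N)^2)

noncomputable def LqcfOp (N K : ℤ) (φF φ2F : ℝ) (v : ℤ → ℝ) (j : ℤ) : ℝ :=
  if -K ≤ j ∧ j ≤ K then Laop N φF φ2F v j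
  else (φF + 4 * φ2F) * ((-v (j+1) + 2 * v j - v (j-1)) / (eps N)^2)

/-!
Let `w = D(u^a - u^{qcf})`, `c = φ''_F + 4φ''_{2F}` and `b = φ''_{2F}`. Both operators are
discrete divergences: `L^a v = -D σ(Dv)` with the stress
`σ(w)_j = c w_j + b (w_{j+1} - 2 w_j + w_{j-1})`, and in the continuum region
`L^{qcf} v = -D(c Dv)`. Hence `σ(w)` takes one value `B` across the atomistic region, while on
each continuum region `c w - g` is constant, where `g_j = -b ε² D³u^a_{j+1}` is bounded by
`γ = |b| ε² ‖D³u^a‖_{ℓ^∞(C̃)}`. So on the continuum regions `c w` stays within `2γ` of its value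
at the interface, and since `b ≤ 0` a discrete maximum principle keeps `c w` within `-4bγ/c` of
`B` on the atomistic region. The boundary conditions give `Σ w = 0`, which bounds `|B|` by the
same quantity, and `(c - 2b)(c + 4b) ≤ c²` turns the resulting estimate `|w| ≤ 4γ(c - 2b)/c²`
into the stated one.
-/

open Finset

theorem Int.apply_eq_of_forall_eq_add_one {α : Type*} {P : ℤ → α} {m n : ℤ}
    (h : ∀ j, m ≤ j → j < n → P j = P (j + 1)) {i : ℤ} (hmi : m ≤ i) (hin : i ≤ n) :
    P i = P m := by
  induction i, hmi using Int.leInduction with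
  | base => rfl
  | succ i hmi ih => rw [← h i hmi (by omega), ih (by omega)]

theorem Int.sum_Icc_sub_sub_one {M : Type*} [AddCommGroup M] (f : ℤ → M) {m n : ℤ} (hmn : m ≤ n) :
    ∑ j ∈ Icc (m + 1) n, (f j - f (j - 1)) = f n - f m := by
  induction n, hmn using Int.leInduction with
  | base => simp
  | succ n hmn ih =>
    rw [← insert_Icc_right_eq_Icc_add_one (by omega), sum_insert (by simp), ih]
    simp only [add_sub_cancel_right]
    abel

theorem abs_le_two_mul_of_sum_eq_zero {ι : Type*} {s : Finset ι} (hs : s.Nonempty) {x : ι → ℝ}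
    {B r : ℝ} (hsum : ∑ i ∈ s, x i = 0) (hx : ∀ i ∈ s, |x i - B| ≤ r) {i : ι} (hi : i ∈ s) :
    |x i| ≤ 2 * r := by
  have hB : |B| ≤ r := by
    have hcard : (0 : ℝ) < #s := by exact_mod_cast hs.card_pos
    have : #s * |B| ≤ #s * r := calc
      #s * |B| = |∑ i ∈ s, (x i - B)| := by
        simp [sum_sub_distrib, hsum, abs_mul]
      _ ≤ ∑ i ∈ s, |x i - B| := abs_sum_le_sum_abs _ _
      _ ≤ #s * r := by simpa using sum_le_sum hx
    exact le_of_mul_le_mul_left this hcard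
  calc |x i| = |(x i - B) + B| := by ring_nf
    _ ≤ |x i - B| + |B| := abs_add_le _ _
    _ ≤ 2 * r := by linarith [hx i hi]

def stress (c b : ℝ) (w : ℤ → ℝ) (j : ℤ) : ℝ := c * w j + b * (w (j + 1) - 2 * w j + w (j - 1))

theorem stress_neg (c b : ℝ) (w : ℤ → ℝ) (j : ℤ) :
    stress c b (fun i => -w i) j = -stress c b w j := by
  unfold stress; ring

section StressBalance

variable {c b δ B γ : ℝ} {w g : ℤ → ℝ} {lo m n hi : ℤ}

theorem mul_le_of_stress_eq (hc : 0 ≤ c) (hb : b ≤ 0) (hδ : 0 ≤ δ) (hmn : m ≤ n)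
    (hB : ∀ j, m ≤ j → j ≤ n → stress c b w j = B)
    (hm : w (m - 1) ≤ w m + δ) (hn : w (n + 1) ≤ w n + δ) {i : ℤ} (hmi : m ≤ i) (hin : i ≤ n) :
    c * w i ≤ B - 2 * b * δ := by
  obtain ⟨k, hk, hmax⟩ := exists_max_image (Icc m n) w ⟨m, left_mem_Icc.mpr hmn⟩
  rw [mem_Icc] at hk
  have hright : w (k + 1) ≤ w k + δ := by
    rcases eq_or_lt_of_le hk.2 with rfl | hkn
    · exact hn
    · linarith [hmax (k + 1) (mem_Icc.mpr ⟨by omega, hkn⟩)]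
  have hleft : w (k - 1) ≤ w k + δ := by
    rcases eq_or_lt_of_le hk.1 with rfl | hmk
    · exact hm
    · linarith [hmax (k - 1) (mem_Icc.mpr ⟨by omega, by omega⟩)]
  have hBk : c * w k = B - b * (w (k + 1) - 2 * w k + w (k - 1)) := by
    rw [← hB k hk.1 hk.2, stress]; ring
  calc c * w i ≤ c * w k := mul_le_mul_of_nonneg_left (hmax i (mem_Icc.mpr ⟨hmi, hin⟩)) hc
    _ ≤ B - 2 * b * δ := by rw [hBk]; nlinarith

theorem abs_mul_sub_le_of_stress_eq (hc : 0 ≤ c) (hb : b ≤ 0) (hmn : m ≤ n)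
    (hB : ∀ j, m ≤ j → j ≤ n → stress c b w j = B)
    (hm : |w (m - 1) - w m| ≤ δ) (hn : |w (n + 1) - w n| ≤ δ) {i : ℤ} (hmi : m ≤ i) (hin : i ≤ n) :
    |c * w i - B| ≤ -2 * b * δ := by
  have hδ : 0 ≤ δ := (abs_nonneg _).trans hm
  rw [abs_sub_le_iff] at hm hn
  have hup := mul_le_of_stress_eq hc hb hδ hmn hB (by linarith) (by linarith) hmi hin
  have hlow := mul_le_of_stress_eq (w := fun i => -w i) (B := -B) hc hb hδ hmn
    (fun j hmj hjn => by rw [stress_neg, hB j hmj hjn]) (by linarith) (by linarith) hmi hin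
  rw [abs_le]
  constructor <;> linarith

theorem abs_mul_sub_mul_le_of_sub_eq
    (hchain : ∀ j, m ≤ j → j < n → c * w j - g j = c * w (j + 1) - g (j + 1))
    (hg : ∀ j, m ≤ j → j ≤ n → |g j| ≤ γ) {i k : ℤ} (hmi : m ≤ i) (hin : i ≤ n)
    (hmk : m ≤ k) (hkn : k ≤ n) :
    |c * w i - c * w k| ≤ 2 * γ := by
  have hi := Int.apply_eq_of_forall_eq_add_one hchain hmi hin
  have hk := Int.apply_eq_of_forall_eq_add_one hchain hmk hkn
  calc |c * w i - c * w k| = |g i - g k| := by congr 1; linarith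
    _ ≤ |g i| + |g k| := abs_sub _ _
    _ ≤ 2 * γ := by linarith [hg i hmi hin, hg k hmk hkn]

theorem abs_le_of_stress_eq (hb : b ≤ 0) (hcb : 0 < c + 4 * b) (hlo : lo < m) (hmn : m ≤ n)
    (hhi : n < hi)
    (hstress : ∀ j, m ≤ j → j < n → stress c b w j = stress c b w (j + 1))
    (hleft : ∀ j, lo ≤ j → j < m → c * w j - g j = c * w (j + 1) - g (j + 1))
    (hright : ∀ j, n ≤ j → j < hi → c * w j - g j = c * w (j + 1) - g (j + 1))
    (hgl : ∀ j, lo ≤ j → j ≤ m → |g j| ≤ γ) (hgr : ∀ j, n ≤ j → j ≤ hi → |g j| ≤ γ)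
    (hsum : ∑ j ∈ Icc lo hi, w j = 0) {j : ℤ} (hj : j ∈ Icc lo hi) :
    |w j| ≤ 4 * γ / (c + 4 * b) := by
  have hc : 0 < c := by linarith
  set δ := 2 * γ / c with hδ
  have hcδ : c * δ = 2 * γ := by rw [hδ]; field_simp
  have hneighbor {i k : ℤ} (h : |c * w i - c * w k| ≤ 2 * γ) : |w i - w k| ≤ δ := by
    rwa [← mul_sub, abs_mul, abs_of_pos hc, ← hcδ, mul_le_mul_iff_right₀ hc] at h
  set B := stress c b w m
  have hinner : ∀ i, m ≤ i → i ≤ n → |c * w i - B| ≤ -2 * b * δ :=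
    fun i => abs_mul_sub_le_of_stress_eq hc.le hb hmn
      (fun k hmk hkn => Int.apply_eq_of_forall_eq_add_one hstress hmk hkn)
      (hneighbor (abs_mul_sub_mul_le_of_sub_eq hleft hgl (by omega) (by omega) (by omega) le_rfl))
      (hneighbor (abs_mul_sub_mul_le_of_sub_eq hright hgr (by omega) (by omega) le_rfl (by omega)))
  have hall : ∀ i ∈ Icc lo hi, |c * w i - B| ≤ 2 * γ - 2 * b * δ := by
    intro i hmem
    rw [mem_Icc] at hmem
    rcases le_or_gt i m with him | hmi
    · calc |c * w i - B| ≤ |c * w i - c * w m| + |c * w m - B| := abs_sub_le _ _ _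
        _ ≤ 2 * γ - 2 * b * δ := by
          linarith [abs_mul_sub_mul_le_of_sub_eq hleft hgl hmem.1 him (by omega) le_rfl,
            hinner m le_rfl hmn]
    rcases le_or_gt n i with hni | hin
    · calc |c * w i - B| ≤ |c * w i - c * w n| + |c * w n - B| := abs_sub_le _ _ _
        _ ≤ 2 * γ - 2 * b * δ := by
          linarith [abs_mul_sub_mul_le_of_sub_eq hright hgr hni hmem.2 le_rfl (by omega),
            hinner n hmn le_rfl]
    · linarith [hinner i hmi.le hin.le, abs_nonneg (g m), hgl m (by omega) le_rfl]
  have hcw := abs_le_two_mul_of_sum_eq_zero (x := fun i => c * w i) ⟨lo, by simp; omega⟩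
    (by rw [← mul_sum, hsum, mul_zero]) hall hj
  rw [abs_mul, abs_of_pos hc] at hcw
  have hδ0 : 0 ≤ δ := by
    rw [hδ]; exact div_nonneg (by linarith [abs_nonneg (g m), hgl m hlo.le le_rfl]) hc.le
  rw [le_div_iff₀ hcb, show 4 * γ = 2 * (c * δ) by rw [hcδ]; ring]
  refine le_of_mul_le_mul_left ?_ hc
  nlinarith [mul_le_mul_of_nonneg_right hcw hcb.le,
    mul_nonneg (mul_nonneg hc.le (neg_nonneg.2 hb)) hδ0, mul_nonneg (sq_nonneg b) hδ0]

end StressBalance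

section QCF

variable {N K : ℤ} {φF φ2F : ℝ} {u v : ℤ → ℝ} {j : ℤ}

theorem eps_pos (hN : 0 < N) : 0 < eps N := by
  unfold eps; have : (0 : ℝ) < N := by exact_mod_cast hN
  positivity

theorem Dd_sub : Dd N (fun i => u i - v i) j = Dd N u j - Dd N v j := by
  unfold Dd; ring

theorem Laop_sub :
    Laop N φF φ2F (fun i => u i - v i) j = Laop N φF φ2F u j - Laop N φF φ2F v j := by
  unfold Laop; ring

theorem sum_Dd_Icc {m n : ℤ} (hmn : m ≤ n) :
    ∑ i ∈ Icc (m + 1) n, Dd N v i = (v n - v m) / eps N := by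
  simp only [Dd, ← sum_div, Int.sum_Icc_sub_sub_one v hmn]

theorem sq_eps_mul_D3 (hε : eps N ≠ 0) :
    eps N ^ 2 * D3 N v (j + 1) = Dd N v (j + 1) - 2 * Dd N v j + Dd N v (j - 1) := by
  unfold D3; rw [add_sub_cancel_right, show j + 1 - 2 = j - 1 by ring]; field_simp

theorem div_sq_eq_Dd_sub_Dd_div (hε : eps N ≠ 0) :
    (-v (j + 1) + 2 * v j - v (j - 1)) / eps N ^ 2 = (Dd N v j - Dd N v (j + 1)) / eps N := by
  unfold Dd; rw [add_sub_cancel_right]; field_simp; ring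

theorem Laop_eq_stress_sub_div (hε : eps N ≠ 0) :
    Laop N φF φ2F v j =
      (stress (φF + 4 * φ2F) φ2F (Dd N v) j - stress (φF + 4 * φ2F) φ2F (Dd N v) (j + 1)) /
        eps N := by
  unfold Laop stress Dd
  rw [show j + 1 + 1 - 1 = j + 1 by ring, add_sub_cancel_right, show j + 1 + 1 = j + 2 by ring,
    show j - 1 - 1 = j - 2 by ring]
  field_simp; ring

theorem stress_Dd_sub_eq_of_Laop_eq_LqcfOp (hε : eps N ≠ 0) (hj : -K ≤ j ∧ j ≤ K)
    (h : Laop N φF φ2F u j = LqcfOp N K φF φ2F v j) :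
    stress (φF + 4 * φ2F) φ2F (Dd N fun i => u i - v i) j =
      stress (φF + 4 * φ2F) φ2F (Dd N fun i => u i - v i) (j + 1) := by
  rw [LqcfOp, if_pos hj, ← sub_eq_zero, ← Laop_sub, Laop_eq_stress_sub_div hε,
    div_eq_zero_iff] at h
  exact sub_eq_zero.mp (h.resolve_right hε)

theorem mul_Dd_sub_sub_eq_of_Laop_eq_LqcfOp (hε : eps N ≠ 0) (hj : ¬(-K ≤ j ∧ j ≤ K))
    (h : Laop N φF φ2F u j = LqcfOp N K φF φ2F v j) :
    (φF + 4 * φ2F) * Dd N (fun i => u i - v i) j - -φ2F * (eps N ^ 2 * D3 N u (j + 1)) =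
      (φF + 4 * φ2F) * Dd N (fun i => u i - v i) (j + 1) -
        -φ2F * (eps N ^ 2 * D3 N u (j + 1 + 1)) := by
  rw [LqcfOp, if_neg hj, Laop_eq_stress_sub_div hε, div_sq_eq_Dd_sub_Dd_div hε, mul_div_assoc',
    div_left_inj' hε] at h
  rw [Dd_sub, Dd_sub, sq_eps_mul_D3 hε, sq_eps_mul_D3 hε]
  unfold stress at h
  linear_combination h

end QCF

theorem qcf_error_estimate_general (N K : ℤ) (hK : 2 ≤ K) (hKN : 2 * K ≤ N)
    (φF φ2F : ℝ) (h2F : φ2F < 0) (hstab : 0 < φF + 8 * φ2F)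
    (hneCt : ((Finset.Icc (-N+2) (-K+1)) ∪ (Finset.Icc (K+2) (N+1))).Nonempty)
    (f ua uq : ℤ → ℝ)
    (hua : ∀ j ∈ Finset.Icc (-N+1) (N-1), Laop N φF φ2F ua j = f j)
    (huq : ∀ j ∈ Finset.Icc (-N+1) (N-1), LqcfOp N K φF φ2F uq j = f j)
    (hbcL : uq (-N) = ua (-N)) (hbcR : uq N = ua N) :
    ∀ j ∈ Finset.Icc (-N+1) N,
      |Dd N (fun i => ua i - uq i) j| ≤
        4 * (eps N)^2 * |φ2F| *
          (((Finset.Icc (-N+2) (-K+1)) ∪ (Finset.Icc (K+2) (N+1))).sup' hneCt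
            (fun i => |D3 N ua i|)) / (φF + 8 * φ2F) := by
  intro j hj
  have hε : eps N ≠ 0 := (eps_pos (by omega)).ne'
  have heq (i : ℤ) (h1 : -N + 1 ≤ i) (h2 : i < N) :
      Laop N φF φ2F ua i = LqcfOp N K φF φ2F uq i := by
    rw [hua i (mem_Icc.2 ⟨h1, by omega⟩), huq i (mem_Icc.2 ⟨h1, by omega⟩)]
  set M := ((Icc (-N+2) (-K+1)) ∪ (Icc (K+2) (N+1))).sup' hneCt (fun i => |D3 N ua i|)
  have hg (i : ℤ) (hi : i + 1 ∈ (Icc (-N+2) (-K+1)) ∪ (Icc (K+2) (N+1))) :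
      |-φ2F * (eps N ^ 2 * D3 N ua (i + 1))| ≤ |φ2F| * eps N ^ 2 * M := by
    rw [abs_mul, abs_mul, abs_neg, abs_pow, sq_abs, mul_assoc]
    gcongr
    exact le_sup' (fun i => |D3 N ua i|) hi
  refine (abs_le_of_stress_eq (lo := -N + 1) (m := -K) (n := K + 1) (hi := N) h2F.le
    (by linarith) (by omega) (by omega) (by omega)
    (fun i h1 h2 =>
      stress_Dd_sub_eq_of_Laop_eq_LqcfOp hε ⟨h1, by omega⟩ (heq i (by omega) (by omega)))
    (fun i h1 h2 => mul_Dd_sub_sub_eq_of_Laop_eq_LqcfOp hε (by omega) (heq i h1 (by omega)))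
    (fun i h1 h2 => mul_Dd_sub_sub_eq_of_Laop_eq_LqcfOp hε (by omega) (heq i (by omega) h2))
    (fun i h1 h2 => hg i (by simp only [mem_union, mem_Icc]; omega))
    (fun i h1 h2 => hg i (by simp only [mem_union, mem_Icc]; omega))
    ?_ hj).trans_eq (by ring)
  rw [sum_Dd_Icc (by omega)]
  simp [hbcL, hbcR]

/-- Error estimate for the force-based QC approximation: if `φ''_F > 0 > φ''_{2F}`
and `φ''_F + 8φ''_{2F} > 0`, and `u^a`, `u^{qcf}` solve the atomistic resp. QCF
equations with matching boundary values, then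
`‖D(u^a - u^{qcf})‖_{ℓ∞} ≤ 4 ε² |φ''_{2F}| ‖D³u^a‖_{ℓ∞(C̃)} / (φ''_F + 8φ''_{2F})`. -/
theorem qcf_error_estimate (N K : ℤ) (hN : 1 ≤ N) (hK : 2 ≤ K) (hKN : 2 * K ≤ N)
    (φF φ2F : ℝ) (hF : 0 < φF) (h2F : φ2F < 0) (hstab : 0 < φF + 8 * φ2F)
    (hneCt : ((Finset.Icc (-N+2) (-K+1)) ∪ (Finset.Icc (K+2) (N+1))).Nonempty)
    (f ua uq : ℤ → ℝ)
    (hua : ∀ j ∈ Finset.Icc (-N+1) (N-1), Laop N φF φ2F ua j = f j)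
    (huq : ∀ j ∈ Finset.Icc (-N+1) (N-1), LqcfOp N K φF φ2F uq j = f j)
    (hbcL : uq (-N) = ua (-N)) (hbcR : uq N = ua N) :
    ∀ j ∈ Finset.Icc (-N+1) N,
      |Dd N (fun i => ua i - uq i) j| ≤
        4 * (eps N)^2 * |φ2F| *
          (((Finset.Icc (-N+2) (-K+1)) ∪ (Finset.Icc (K+2) (N+1))).sup' hneCt
            (fun i => |D3 N ua i|)) / (φF + 8 * φ2F) :=
  qcf_error_estimate_general N K hK hKN φF φ2F h2F hstab hneCt f ua uq hua huq hbcL hbcR
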